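/- Let n ≥ 1 and let G be the tree on 2n + 2 vertices consisting of two stars with centers c and c′ and leaves x_1,…,x_n and y_1,…,y_n respectively, together with the edge {c, c′}; let κ color each pair of edges {c, x_i} and {c′, y_i} with color i (for 1 ≤ i ≤ n) and the edge {c, c′} with color n + 1. Then the coloring group 𝔊_κ is isomorphic to the hyperoctahedral group C₂ ≀ S_{n+1}, i.e. the wreath product ((Z/2Z)^{n+1}) ⋊ S_{n+1} with S_{n+1} permuting the coordinates, a group of order 2^{n+1}·(n+1)!. -/

import Mathlib

open scoped Classical

/-- A proper edge coloring of a finite simple graph `G` with colors `{1, …, k}`: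
it assigns colors in `{1, …, k}` to edges, is surjective onto `{1, …, k}`, and
incident edges receive distinct colors. -/
def IsProperEdgeColoring {V : Type*} (G : SimpleGraph V) (k : ℕ) (κ : Sym2 V → ℕ) : Prop :=
  (∀ e ∈ G.edgeSet, κ e ∈ Finset.Icc 1 k) ∧
  (∀ a ∈ Finset.Icc 1 k, ∃ e ∈ G.edgeSet, κ e = a) ∧
  (∀ u v w : V, G.Adj u v → G.Adj u w → v ≠ w → κ s(u, v) ≠ κ s(u, w))
/-- `IsToggle G κ a τ` says that the permutation `τ` is the product of the
transpositions `(i j)` over all edges `{i,j}` of `G` colored `a`: it swaps the two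
endpoints of every edge colored `a` and fixes all other vertices. -/
def IsToggle {V : Type*} (G : SimpleGraph V) (κ : Sym2 V → ℕ) (a : ℕ) (τ : Equiv.Perm V) : Prop :=
  ∀ v w : V, v ≠ w → (τ v = w ↔ G.Adj v w ∧ κ s(v, w) = a)
/-- The coloring group `𝔊_κ`: the subgroup of `Sym(V)` generated by the
permutations `τ_1, …, τ_k` associated to the colors `1, …, k`. -/
def coloringGroup {V : Type*} (G : SimpleGraph V) (k : ℕ) (κ : Sym2 V → ℕ) :
    Subgroup (Equiv.Perm V) :=
  Subgroup.closure { τ : Equiv.Perm V | ∃ a : ℕ, 1 ≤ a ∧ a ≤ k ∧ IsToggle G κ a τ }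
/-- The "negation" permutation of `Fin m × Bool` (the set of `m` letters with signs),
flipping the sign of every letter. The hyperoctahedral group `C₂ ≀ S_m` of signed
permutations of `m` letters is realized as the centralizer of this permutation in
`Sym(Fin m × Bool)`. -/
def negPerm (m : ℕ) : Equiv.Perm (Fin m × Bool) :=
  Equiv.prodCongr (Equiv.refl (Fin m)) ⟨Bool.not, Bool.not, Bool.not_not, Bool.not_not⟩

/-- The tree on `2n + 2` vertices consisting of two stars with centers `(false, 0)` and
`(true, 0)` and leaves `(b, i)` for `1 ≤ i ≤ n`, joined by the edge between the two
centers. -/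
def twoStars (n : ℕ) : SimpleGraph (Bool × Fin (n + 1)) :=
  SimpleGraph.fromRel fun u v =>
    (u.2 = 0 ∧ v.2 ≠ 0 ∧ u.1 = v.1) ∨ (u.2 = 0 ∧ v.2 = 0 ∧ u.1 ≠ v.1)

/-- The coloring of `twoStars n` giving the pair of edges `{(b,0), (b,i)}` (for
`b = false, true`) the color `i` for each `1 ≤ i ≤ n`, and the central edge
`{(false,0), (true,0)}` the color `n + 1`. -/
def twoStarsColoring (n : ℕ) : Sym2 (Bool × Fin (n + 1)) → ℕ :=
  Sym2.lift
    ⟨fun u v => if max u.2.val v.2.val = 0 then n + 1 else max u.2.val v.2.val,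
     fun u v => by simp only []; rw [max_comm]⟩

/-!
Read the vertex `(b, i)` as the letter `i` carrying the sign `b`, the two centres being the
letter `0`. The toggle of colour `i ≤ n` is the transposition of the letters `0` and `i` (on both
signs), and the toggle of colour `n + 1` flips the sign of the letter `0`; all of them commute
with the global sign flip. Conversely, a permutation commuting with the global sign flip is a
permutation of the letters times sign flips of some letters. The transpositions `(0 i)` generate
all permutations of the letters, and conjugating the sign flip of `0` by `(0 j)` gives the sign
flip of `j`, so the coloring group is the whole centralizer of the global sign flip. Swapping the
two factors of `Bool × Fin (n + 1)` carries this centralizer onto that of `negPerm (n + 1)`.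
-/

open Equiv

namespace SignedPerm

variable {α : Type*}

def flipAll : Perm (Bool × α) := prodCongr boolNot (Equiv.refl α)

def liftPerm : Perm α →* Perm (Bool × α) where
  toFun π := prodCongr (Equiv.refl Bool) π
  map_one' := rfl
  map_mul' _ _ := rfl

@[simp] lemma flipAll_apply (p : Bool × α) : flipAll p = (!p.1, p.2) := rfl
@[simp] lemma liftPerm_apply (π : Perm α) (p : Bool × α) : liftPerm π p = (p.1, π p.2) := rfl

lemma apply_flipAll_of_commute {σ : Perm (Bool × α)} (hσ : Commute σ flipAll)
    (p : Bool × α) :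
    σ (flipAll p) = flipAll (σ p) :=
  Perm.ext_iff.mp hσ.eq p

lemma eq_or_eq_flipAll_of_snd_eq {p q : Bool × α} (h : p.2 = q.2) : q = p ∨ q = flipAll p := by
  obtain ⟨b, j⟩ := p; obtain ⟨c, k⟩ := q
  cases b <;> cases c <;> simp_all

/-- A permutation commuting with `flipAll` permutes the fibres `{(false, j), (true, j)}`; this is
the induced permutation of `α`. -/
noncomputable def basePerm [Finite α] (σ : Perm (Bool × α)) (hσ : Commute σ flipAll) :
    Perm α :=
  Equiv.ofBijective (fun j => (σ (false, j)).2) <| Finite.injective_iff_bijective.mp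
    fun j k h => by
      rcases eq_or_eq_flipAll_of_snd_eq h with h | h
      · exact congrArg Prod.snd (σ.injective h).symm
      · rw [← apply_flipAll_of_commute hσ] at h
        simpa using σ.injective h

lemma commute_liftPerm_flipAll (π : Perm α) : Commute (liftPerm π) flipAll := by
  ext <;> simp

section

variable [DecidableEq α]

def flipAt (j : α) : Perm (Bool × α) := swap (false, j) (true, j)

def flipOn (s : Finset α) : Perm (Bool × α) :=
  Function.Involutive.toPerm (fun p => (xor (decide (p.2 ∈ s)) p.1, p.2)) fun p => by simp

@[simp] lemma flipOn_apply (s : Finset α) (p : Bool × α) :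
    flipOn s p = (xor (decide (p.2 ∈ s)) p.1, p.2) := rfl

lemma flipAt_apply (j : α) (p : Bool × α) : flipAt j p = if p.2 = j then flipAll p else p := by
  obtain ⟨b, k⟩ := p
  by_cases h : k = j
  · subst h; cases b <;> simp [flipAt]
  · simp [flipAt, swap_apply_of_ne_of_ne, h]

lemma flipOn_insert {a : α} {s : Finset α} (ha : a ∉ s) :
    flipOn (insert a s) = flipAt a * flipOn s := by
  ext ⟨b, k⟩ <;> by_cases hk : k = a <;> simp_all [flipAt_apply]

lemma liftPerm_mul_flipAt_mul_inv (π : Perm α) (j : α) :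
    liftPerm π * flipAt j * (liftPerm π)⁻¹ = flipAt (π j) := by
  rw [flipAt, ← swap_apply_apply]; rfl

lemma flipOn_mem_closure (s : Finset α) : flipOn s ∈ Subgroup.closure (Set.range flipAt) := by
  induction s using Finset.induction_on with
  | empty => convert (Subgroup.closure _).one_mem; ext <;> simp
  | insert a s ha ih =>
    rw [flipOn_insert ha]
    exact mul_mem (Subgroup.subset_closure ⟨a, rfl⟩) ih

lemma commute_flipAt_flipAll (j : α) : Commute (flipAt j) flipAll := by
  ext p <;> simp only [Perm.mul_apply, flipAt_apply] <;> split_ifs <;> simp_all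

lemma eq_liftPerm_mul_flipOn [Fintype α] {σ : Perm (Bool × α)} (hσ : Commute σ flipAll) :
    σ = liftPerm (basePerm σ hσ) * flipOn {j | (σ (false, j)).1} := by
  ext ⟨b, j⟩ : 1
  cases b
  · simp [basePerm]
  · rw [show (true, j) = flipAll (false, j) from rfl, apply_flipAll_of_commute hσ]
    simp [basePerm]

theorem centralizer_flipAll_eq_closure [Fintype α] :
    Subgroup.centralizer {flipAll} =
      Subgroup.closure (Set.range (liftPerm (α := α)) ∪ Set.range flipAt) := by
  refine le_antisymm (fun σ hσ => ?_) (Subgroup.closure_le _ |>.mpr ?_)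
  · rw [eq_liftPerm_mul_flipOn (Subgroup.mem_centralizer_singleton_iff.mp hσ)]
    exact mul_mem (Subgroup.subset_closure (.inl ⟨_, rfl⟩))
      (Subgroup.closure_mono Set.subset_union_right (flipOn_mem_closure _))
  · rintro _ (⟨π, rfl⟩ | ⟨j, rfl⟩)
    · exact Subgroup.mem_centralizer_singleton_iff.mpr (commute_liftPerm_flipAll π)
    · exact Subgroup.mem_centralizer_singleton_iff.mpr (commute_flipAt_flipAll j)

end

end SignedPerm

open SignedPerm

lemma Equiv.Perm.eq_top_of_forall_swap_mem {α : Type*} [Finite α] [DecidableEq α]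
    {K : Subgroup (Perm α)} (a : α) (h : ∀ x, swap a x ∈ K) : K = ⊤ := by
  rw [eq_top_iff, ← Perm.closure_isSwap, Subgroup.closure_le]
  rintro _ ⟨x, y, -, rfl⟩
  exact SubmonoidClass.swap_mem_trans K (swap_comm a x ▸ h x) (h y)

lemma IsToggle.apply_eq {V : Type*} {G : SimpleGraph V} {κ : Sym2 V → ℕ} {a : ℕ}
    {τ τ' : Perm V} (h : IsToggle G κ a τ) (h' : IsToggle G κ a τ') {v : V}
    (hv : τ v ≠ v) :
    τ' v = τ v :=
  (h' v _ hv.symm).mpr ((h v _ hv.symm).mp rfl)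

lemma IsToggle.unique {V : Type*} {G : SimpleGraph V} {κ : Sym2 V → ℕ} {a : ℕ}
    {τ τ' : Perm V} (h : IsToggle G κ a τ) (h' : IsToggle G κ a τ') : τ = τ' := by
  ext v
  by_cases hv : τ v = v
  · by_cases hv' : τ' v = v
    · rw [hv, hv']
    · exact h'.apply_eq h hv'
  · exact (h.apply_eq h' hv).symm

lemma IsToggle.mem_coloringGroup {V : Type*} {G : SimpleGraph V} {κ : Sym2 V → ℕ} {a k : ℕ}
    {τ : Perm V} (h : IsToggle G κ a τ) (ha : 1 ≤ a) (hak : a ≤ k) :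
    τ ∈ coloringGroup G k κ :=
  Subgroup.subset_closure ⟨a, ha, hak, h⟩

lemma twoStarsColoring_mk {n : ℕ} (u v : Bool × Fin (n + 1)) :
    twoStarsColoring n s(u, v) = if max u.2.val v.2.val = 0 then n + 1 else max u.2.val v.2.val :=
  rfl

-- Also true for `i = 0`: `swap 0 0 = 1`, and no edge has colour `0`.
lemma isToggle_liftPerm_swap {n : ℕ} (i : Fin (n + 1)) :
    IsToggle (twoStars n) (twoStarsColoring n) i (liftPerm (swap 0 i)) := by
  rintro ⟨b, j⟩ ⟨c, k⟩ hne
  cases b <;> cases c <;>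
    simp only [liftPerm_apply, swap_apply_def, twoStars, SimpleGraph.fromRel_adj,
      twoStarsColoring_mk, Nat.max_def, Prod.ext_iff, ne_eq, Fin.ext_iff, Fin.val_zero,
      apply_ite Fin.val] at hne ⊢ <;>
    split_ifs <;>
    simp only [Bool.false_eq_true, Bool.true_eq_false, true_and, false_and, and_true, and_false,
      or_false, false_or, false_iff, not_true_eq_false, not_false_eq_true] at hne ⊢ <;>
    omega

lemma isToggle_flipAt_zero {n : ℕ} :
    IsToggle (twoStars n) (twoStarsColoring n) (n + 1) (flipAt 0) := by
  rintro ⟨b, j⟩ ⟨c, k⟩ hne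
  cases b <;> cases c <;>
    simp only [flipAt_apply, flipAll_apply, apply_ite Prod.fst, apply_ite Prod.snd, twoStars,
      SimpleGraph.fromRel_adj, twoStarsColoring_mk, Nat.max_def, Prod.ext_iff, ne_eq, Fin.ext_iff,
      Fin.val_zero] at hne ⊢ <;>
    split_ifs <;>
    simp only [Bool.not_false, Bool.not_true, Bool.false_eq_true, Bool.true_eq_false, true_and,
      false_and, and_true, and_false, or_false, false_or, false_iff, not_true_eq_false,
      not_false_eq_true] at hne ⊢ <;>
    omega

lemma MulEquiv.map_centralizer_singleton {G H : Type*} [Group G] [Group H] (e : G ≃* H) (g : G) :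
    (Subgroup.centralizer {g}).map e = Subgroup.centralizer {e g} := by
  ext x
  rw [Subgroup.map_equiv_eq_comap_symm, Subgroup.mem_comap, Subgroup.mem_centralizer_singleton_iff,
    Subgroup.mem_centralizer_singleton_iff, ← e.injective.eq_iff, map_mul, map_mul]
  simp only [MonoidHom.coe_coe, apply_symm_apply]

lemma liftPerm_mem_coloringGroup_twoStars {n : ℕ} (π : Perm (Fin (n + 1))) :
    liftPerm π ∈ coloringGroup (twoStars n) (n + 1) (twoStarsColoring n) := by
  suffices (coloringGroup (twoStars n) (n + 1) (twoStarsColoring n)).comap liftPerm = ⊤ from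
    Subgroup.mem_comap.mp (this ▸ Subgroup.mem_top π)
  refine Perm.eq_top_of_forall_swap_mem 0 fun i => ?_
  rcases eq_or_ne i 0 with rfl | hi
  · rw [swap_self, ← Perm.one_def]
    exact one_mem _
  · exact (isToggle_liftPerm_swap i).mem_coloringGroup
      (Nat.one_le_iff_ne_zero.mpr (Fin.val_ne_zero_iff.mpr hi)) (by omega)

lemma flipAt_mem_coloringGroup_twoStars {n : ℕ} (j : Fin (n + 1)) :
    flipAt j ∈ coloringGroup (twoStars n) (n + 1) (twoStarsColoring n) := by
  rw [← swap_apply_left 0 j, ← liftPerm_mul_flipAt_mul_inv]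
  exact mul_mem (mul_mem (liftPerm_mem_coloringGroup_twoStars _)
    (isToggle_flipAt_zero.mem_coloringGroup (by omega) le_rfl))
    (inv_mem (liftPerm_mem_coloringGroup_twoStars _))

theorem coloringGroup_twoStars (n : ℕ) :
    coloringGroup (twoStars n) (n + 1) (twoStarsColoring n) = Subgroup.centralizer {flipAll} := by
  rw [centralizer_flipAll_eq_closure]
  apply le_antisymm
  · rw [coloringGroup, Subgroup.closure_le]
    rintro τ ⟨a, -, ha, hτ⟩
    rcases ha.lt_or_eq with ha | rfl
    · exact Subgroup.subset_closure
        (.inl ⟨_, (hτ.unique (isToggle_liftPerm_swap ⟨a, ha⟩)).symm⟩)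
    · exact Subgroup.subset_closure (.inr ⟨0, (hτ.unique isToggle_flipAt_zero).symm⟩)
  · rw [Subgroup.closure_le, Set.union_subset_iff]
    constructor
    · rintro _ ⟨π, rfl⟩
      exact liftPerm_mem_coloringGroup_twoStars π
    · rintro _ ⟨j, rfl⟩
      exact flipAt_mem_coloringGroup_twoStars j

theorem stmt_19_general (n : ℕ) :
    Nonempty
      (↥(coloringGroup (twoStars n) (n + 1) (twoStarsColoring n)) ≃*
        ↥(Subgroup.centralizer
            ({negPerm (n + 1)} : Set (Equiv.Perm (Fin (n + 1) × Bool))))) := by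
  let e := (prodComm Bool (Fin (n + 1))).permCongrHom
  have he : e flipAll = negPerm (n + 1) := rfl
  rw [coloringGroup_twoStars, ← he, ← MulEquiv.map_centralizer_singleton]
  exact ⟨e.subgroupMap _⟩

/-- For `n ≥ 1`, the coloring group of the tree made of two stars with
`n` leaves each, edges paired up by colors `1, …, n` and centers joined by an edge of
color `n + 1`, is isomorphic to the hyperoctahedral group `C₂ ≀ S_{n+1}` of signed
permutations of `n + 1` letters (realized as the centralizer of the sign-flip involution
in `Sym(Fin (n+1) × Bool)`), a group of order `2^{n+1} · (n+1)!`. -/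
theorem stmt_19 (n : ℕ) (hn : 1 ≤ n) :
    Nonempty
      (↥(coloringGroup (twoStars n) (n + 1) (twoStarsColoring n)) ≃*
        ↥(Subgroup.centralizer
            ({negPerm (n + 1)} : Set (Equiv.Perm (Fin (n + 1) × Bool))))) :=
  stmt_19_general n
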